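/- arXiv:2305.03110 — 3 statements merged into one kernel-verified Lean document; each statement's English description precedes it below -/
import Mathlib

section
/- Let p ≥ 2, M > 0, and σ² > 0. Then (1/2)√p·σ ≤ Ψ_p(M, σ²) ≤ max{(1/2)√p·σ, (1/(2e))·p·M}. -/
/-!
Write `L = log (p M² / σ²)`, so that `σ = √p · M · e^{-L/2}` and `(1/2)√p σ = (p/2) e^{-L/2} M`.
In each branch of `Ψ_p` both bounds reduce to `x ≤ e^{x-1}` or to `L ≥ 2`: for `L > p`
one compares `e^{-L/p}` with `(p/2) e^{-L/2}` and with `e^{-1}`, and for `2 ≤ L ≤ p` one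
compares `p / (e L)` with `(p/2) e^{-L/2}` and with `p / (2e)`.
-/

noncomputable def Psi (p M s2 : ℝ) : ℝ :=
  if p < Real.log (p * M ^ 2 / s2) then (s2 / (p * M ^ 2)) ^ (1 / p) * M
  else if p < (Real.exp 1) ^ 2 * s2 / M ^ 2 then (1 / 2) * Real.sqrt p * Real.sqrt s2
  else p / (Real.exp 1 * Real.log (p * M ^ 2 / s2)) * M

open Real

lemma le_exp_sub_one (x : ℝ) : x ≤ exp (x - 1) := by
  linarith [add_one_le_exp (x - 1)]

lemma mul_mul_exp_neg_half_le_two (L : ℝ) : exp 1 * L * exp (-L / 2) ≤ 2 := by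
  have h : exp 1 * (L / 2) ≤ exp (L / 2) := by
    simpa [exp_sub, le_div_iff₀ (exp_pos 1), mul_comm] using le_exp_sub_one (L / 2)
  calc exp 1 * L * exp (-L / 2) = 2 * (exp 1 * (L / 2)) * exp (-(L / 2)) := by ring_nf
    _ ≤ 2 * exp (L / 2) * exp (-(L / 2)) := by gcongr
    _ = 2 := by rw [mul_assoc, ← exp_add, add_neg_cancel, exp_zero, mul_one]

lemma half_mul_sqrt_mul_sqrt_eq {p M s2 : ℝ} (hp : 0 < p) (hM : 0 < M) (hs : 0 < s2) :
    1 / 2 * √p * √s2 = p / 2 * exp (-log (p * M ^ 2 / s2) / 2) * M := by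
  have hs2 : s2 = p * M ^ 2 * exp (-log (p * M ^ 2 / s2)) := by
    rw [exp_neg, exp_log (by positivity)]
    field_simp
  have hsqrt : √s2 = √p * M * exp (-log (p * M ^ 2 / s2) / 2) := by
    rw [hs2, sqrt_mul (by positivity), sqrt_mul hp.le, sqrt_sq hM.le, ← exp_half, ← hs2]
  rw [hsqrt]
  linear_combination (1 / 2 * M * exp (-log (p * M ^ 2 / s2) / 2)) * mul_self_sqrt hp.le

lemma rpow_inv_div_eq_exp {p M s2 : ℝ} (hp : 0 < p) (hM : 0 < M) (hs : 0 < s2) :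
    (s2 / (p * M ^ 2)) ^ (1 / p) = exp (-log (p * M ^ 2 / s2) / p) := by
  rw [rpow_def_of_pos (by positivity), ← inv_div, log_inv]
  ring_nf

lemma half_mul_exp_neg_half_le_exp_neg_div {p L : ℝ} (hp : 2 ≤ p) (hpL : p ≤ L) :
    p / 2 * exp (-L / 2) ≤ exp (-L / p) := by
  have hp0 : 0 < p := by linarith
  -- `L (p - 2) / (2p)` is increasing in `L`, and equals `p/2 - 1` at `L = p`.
  have hexponent : p / 2 - 1 ≤ L / 2 - L / p := by
    have : p / 2 - 1 - (L / 2 - L / p) = -((L - p) * (p - 2) / (2 * p)) := by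
      field_simp; ring
    have : 0 ≤ (L - p) * (p - 2) / (2 * p) := by
      apply div_nonneg (mul_nonneg _ _) <;> linarith
    linarith
  calc p / 2 * exp (-L / 2) ≤ exp (p / 2 - 1) * exp (-L / 2) := by
        gcongr; exact le_exp_sub_one _
    _ ≤ exp (L / 2 - L / p) * exp (-L / 2) := by gcongr
    _ = exp (-L / p) := by rw [← exp_add]; ring_nf

lemma exp_neg_div_le {p L : ℝ} (hp : 2 ≤ p) (hpL : p ≤ L) :
    exp (-L / p) ≤ 1 / (2 * exp 1) * p := by
  have hp0 : 0 < p := by linarith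
  calc exp (-L / p) ≤ exp (-1) := exp_le_exp.mpr (by rw [div_le_iff₀ hp0]; linarith)
    _ = 1 / (2 * exp 1) * 2 := by rw [exp_neg]; field_simp
    _ ≤ 1 / (2 * exp 1) * p := by gcongr

lemma half_mul_exp_neg_half_le_div {p L : ℝ} (hp : 0 ≤ p) (hL : 0 < L) :
    p / 2 * exp (-L / 2) ≤ p / (exp 1 * L) := by
  rw [le_div_iff₀ (by positivity)]
  calc p / 2 * exp (-L / 2) * (exp 1 * L) = p / 2 * (exp 1 * L * exp (-L / 2)) := by ring
    _ ≤ p / 2 * 2 := by gcongr; exact mul_mul_exp_neg_half_le_two L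
    _ = p := by ring

lemma div_exp_one_mul_le {p L : ℝ} (hp : 0 ≤ p) (hL : 2 ≤ L) :
    p / (exp 1 * L) ≤ 1 / (2 * exp 1) * p := by
  rw [one_div_mul_eq_div, mul_comm 2]
  gcongr

theorem psi_bounds (p M s2 : ℝ) (hp : 2 ≤ p) (hM : 0 < M) (hs : 0 < s2) :
    (1 / 2) * Real.sqrt p * Real.sqrt s2 ≤ Psi p M s2 ∧
    Psi p M s2 ≤ max ((1 / 2) * Real.sqrt p * Real.sqrt s2)
      ((1 / (2 * Real.exp 1)) * p * M) := by
  have hp0 : 0 < p := by linarith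
  unfold Psi
  rw [rpow_inv_div_eq_exp hp0 hM hs, half_mul_sqrt_mul_sqrt_eq hp0 hM hs]
  set L := log (p * M ^ 2 / s2)
  split_ifs with hpL hsmall
  · exact ⟨by gcongr; exact half_mul_exp_neg_half_le_exp_neg_div hp hpL.le,
      le_max_of_le_right (by gcongr; exact exp_neg_div_le hp hpL.le)⟩
  · exact ⟨le_rfl, le_max_left _ _⟩
  · have hL : 2 ≤ L := by
      rw [le_log_iff_exp_le (by positivity), le_div_iff₀ hs, show exp 2 = exp 1 ^ 2 by simp]
      rwa [not_lt, div_le_iff₀ (by positivity)] at hsmall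
    exact ⟨by gcongr; exact half_mul_exp_neg_half_le_div hp0.le (by linarith),
      le_max_of_le_right (by gcongr; exact div_exp_one_mul_le hp0.le hL)⟩
end

section
/- Let k ≤ p/log(m s / p) with k = ⌊p/log(ms/p)⌋ and p ≤ ms/e. Then binom(ms, k)^{1/p} ≤ e³. -/
open Real Finset Nat

lemma pow_self_le_exp_mul_factorial (k : ℕ) : (k : ℝ) ^ k ≤ Real.exp k * k ! := by
  have h : (k : ℝ) ^ k / k ! ≤ Real.exp k := by
    calc (k : ℝ) ^ k / k ! ≤ ∑ i ∈ Finset.range (k + 1), (k : ℝ) ^ i / i ! :=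
          Finset.single_le_sum (f := fun i => (k : ℝ) ^ i / (i ! : ℝ))
            (fun i _ => by positivity) (Finset.self_mem_range_succ k)
      _ ≤ Real.exp k := Real.sum_le_exp_of_nonneg (Nat.cast_nonneg k) _
  rw [div_le_iff₀ (by positivity)] at h
  linarith

theorem choose_floor_bound (m s : ℕ) (hm : 0 < m) (hs : 0 < s) (p : ℝ) (hp : 2 ≤ p)
    (hms : Real.exp 1 * p ≤ ((m * s : ℕ) : ℝ)) :
    (((m * s).choose ⌊p / Real.log (((m * s : ℕ) : ℝ) / p)⌋₊ : ℕ) : ℝ) ^ (1 / p) ≤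
      Real.exp 1 ^ 3 := by
  set N : ℕ := m * s with hN
  have hp0 : (0 : ℝ) < p := by linarith
  have hNpos : (0 : ℝ) < (N : ℝ) := by
    have : 0 < N := Nat.mul_pos hm hs
    exact_mod_cast this
  have hNp : Real.exp 1 ≤ (N : ℝ) / p := (le_div_iff₀ hp0).mpr hms
  have hNppos : (0 : ℝ) < (N : ℝ) / p := by positivity
  set L := Real.log ((N : ℝ) / p) with hL
  have hL1 : 1 ≤ L := (Real.le_log_iff_exp_le hNppos).mpr hNp
  have hL0 : 0 < L := by linarith
  set k := ⌊p / L⌋₊ with hk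
  have hkL : (k : ℝ) ≤ p / L := Nat.floor_le (by positivity)
  have hkp : (k : ℝ) ≤ p := hkL.trans (div_le_self hp0.le hL1)
  rcases Nat.eq_zero_or_pos k with hk0 | hk1
  · rw [hk0]
    simp only [Nat.choose_zero_right, Nat.cast_one, Real.one_rpow]
    rw [Real.exp_one_pow]
    exact Real.one_le_exp (by norm_num)
  · have hkR : (0 : ℝ) < (k : ℝ) := by exact_mod_cast hk1
    set A : ℝ := Real.exp 1 * N / k with hA
    have hA0 : 0 < A := by positivity
    -- choose bound
    have hchoose : ((N.choose k : ℕ) : ℝ) ≤ A ^ k := by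
      calc ((N.choose k : ℕ) : ℝ) ≤ (N : ℝ) ^ k / k ! := by
            exact_mod_cast Nat.choose_le_pow_div k N
        _ ≤ A ^ k := by
            rw [hA, div_pow, mul_pow, Real.exp_one_pow, div_le_div_iff₀ (by positivity)
              (by positivity)]
            have := pow_self_le_exp_mul_factorial k
            calc (N : ℝ) ^ k * (k : ℝ) ^ k ≤ (N : ℝ) ^ k * (Real.exp k * k !) := by
                  apply mul_le_mul_of_nonneg_left this (by positivity)
              _ = Real.exp k * (N : ℝ) ^ k * k ! := by ring
    -- key log inequality
    have hlogk : (k : ℝ) * (Real.log p - Real.log k) ≤ p - k := by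
      have h1 : Real.log (p / k) ≤ p / k - 1 := Real.log_le_sub_one_of_pos (by positivity)
      have h2 : Real.log (p / k) = Real.log p - Real.log k :=
        Real.log_div (ne_of_gt hp0) (ne_of_gt hkR)
      rw [h2] at h1
      have := mul_le_mul_of_nonneg_left h1 hkR.le
      have heq : (k : ℝ) * (p / k - 1) = p - k := by field_simp
      linarith [heq ▸ this]
    have hLeq : L = Real.log N - Real.log p := Real.log_div (ne_of_gt hNpos) (ne_of_gt hp0)
    have hkLp : (k : ℝ) * L ≤ p := by
      calc (k : ℝ) * L ≤ (p / L) * L := mul_le_mul_of_nonneg_right hkL hL0.le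
        _ = p := div_mul_cancel₀ p (ne_of_gt hL0)
    have hlogA : Real.log A = 1 + Real.log N - Real.log k := by
      rw [hA, Real.log_div (by positivity) (ne_of_gt hkR),
        Real.log_mul (Real.exp_ne_zero 1) (ne_of_gt hNpos), Real.log_exp]
    have hkey : (k : ℝ) * Real.log A ≤ 3 * p := by
      rw [hlogA]
      have : (k : ℝ) * (1 + Real.log N - Real.log k)
          = k + k * L + k * (Real.log p - Real.log k) := by rw [hLeq]; ring
      rw [this]
      linarith
    -- finish via rpow
    calc ((N.choose k : ℕ) : ℝ) ^ (1 / p) ≤ (A ^ k) ^ (1 / p) :=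
          Real.rpow_le_rpow (by positivity) hchoose (by positivity)
      _ = A ^ ((k : ℝ) * (1 / p)) := by
          rw [← Real.rpow_natCast A k, ← Real.rpow_mul hA0.le]
      _ ≤ Real.exp 1 ^ 3 := by
          rw [Real.rpow_def_of_pos hA0, Real.exp_one_pow, Real.exp_le_exp]
          have : Real.log A * ((k : ℝ) * (1 / p)) = (k : ℝ) * Real.log A / p := by ring
          rw [this, div_le_iff₀ hp0]
          push_cast
          linarith
end

section
/- Let p ≥ 2 and m ≥ s ≥ 1, and assume m/p ≥ e. If p ≥ log m, then k = ⌊p/log(m/p)⌋ ≥ 1, and consequently k + 1 ≤ 2p/log(m/p), and binom(m, k+1)^{1/p} ≤ 2e³. -/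
open Real

set_option maxHeartbeats 1000000 in
theorem floor_and_choose_bound (m : ℕ) (p : ℝ) (hp : 2 ≤ p)
    (hm : Real.exp 1 * p ≤ (m : ℝ)) (hpm : Real.log m ≤ p) :
    1 ≤ ⌊p / Real.log ((m : ℝ) / p)⌋₊ ∧
    ((⌊p / Real.log ((m : ℝ) / p)⌋₊ : ℝ) + 1) ≤ 2 * p / Real.log ((m : ℝ) / p) ∧
    ((m.choose (⌊p / Real.log ((m : ℝ) / p)⌋₊ + 1) : ℕ) : ℝ) ^ (1 / p) ≤
      2 * Real.exp 1 ^ 3 := by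
  have hp0 : (0:ℝ) < p := by linarith
  have he1 : (1:ℝ) < Real.exp 1 := by
    have := Real.add_one_lt_exp (x := 1) one_ne_zero; linarith
  have hm0 : (0:ℝ) < m := lt_of_lt_of_le (by nlinarith) hm
  have hmp0 : (0:ℝ) < (m:ℝ)/p := div_pos hm0 hp0
  set L : ℝ := Real.log ((m:ℝ)/p) with hLdef
  have hemp : Real.exp 1 ≤ (m:ℝ)/p := (le_div_iff₀ hp0).2 hm
  have hL1 : (1:ℝ) ≤ L := by
    rw [hLdef, Real.le_log_iff_exp_le hmp0]; exact hemp
  have hLsplit : L = Real.log m - Real.log p := by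
    rw [hLdef]; exact Real.log_div (ne_of_gt hm0) (ne_of_gt hp0)
  clear_value L
  have hL0 : (0:ℝ) < L := by linarith
  have hlogp : 0 < Real.log p := Real.log_pos (by linarith)
  have hLp : L ≤ p := by rw [hLsplit]; linarith
  have hpL1 : (1:ℝ) ≤ p / L := (le_div_iff₀ hL0).2 (by linarith)
  set k : ℕ := ⌊p / L⌋₊ with hkdef
  have hk1 : 1 ≤ k := by
    rw [hkdef]; exact Nat.le_floor (by exact_mod_cast hpL1)
  have hkle : (k:ℝ) ≤ p / L := by rw [hkdef]; exact Nat.floor_le (by linarith)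
  have hklt : p / L < (k:ℝ) + 1 := by rw [hkdef]; exact Nat.lt_floor_add_one _
  clear_value k
  have hk2 : ((k:ℝ) + 1) ≤ 2 * p / L := by
    rw [mul_div_assoc]; linarith
  refine ⟨hk1, hk2, ?_⟩
  have hK0 : (0:ℝ) < ((k:ℝ) + 1) := by positivity
  have hKcast : ((k + 1 : ℕ) : ℝ) = (k:ℝ) + 1 := by push_cast; ring
  have hKge : p / L ≤ (k:ℝ) + 1 := le_of_lt hklt
  have hlogK : Real.log p - Real.log L ≤ Real.log ((k:ℝ) + 1) := by
    have := Real.log_le_log (div_pos hp0 hL0) hKge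
    rwa [Real.log_div (ne_of_gt hp0) (ne_of_gt hL0)] at this
  have hA : (0:ℝ) ≤ 1 + L + Real.log L := by
    have := Real.log_nonneg hL1; linarith
  have hfactor : 1 + Real.log m - Real.log ((k:ℝ)+1) ≤ 1 + L + Real.log L := by
    have h := hLsplit; linarith [hlogK]
  have hc0 : 0 < Real.log 2 := Real.log_pos (by norm_num)
  have hc1 : Real.log 2 ≤ 1 := by
    have := Real.log_le_sub_one_of_pos (x := 2) (by norm_num); linarith
  have hlogL : Real.log L ≤ Real.log 2 + L/2 - 1 := by
    have h1 : Real.log (L/2) ≤ L/2 - 1 := Real.log_le_sub_one_of_pos (by positivity)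
    have h2 : Real.log (L/2) = Real.log L - Real.log 2 :=
      Real.log_div (ne_of_gt hL0) (by norm_num)
    linarith
  have key : ((k:ℝ)+1) * (1 + Real.log m - Real.log ((k:ℝ)+1)) ≤ p * (3 + Real.log 2) := by
    have step1 : ((k:ℝ)+1) * (1 + Real.log m - Real.log ((k:ℝ)+1))
        ≤ ((k:ℝ)+1) * (1 + L + Real.log L) :=
      mul_le_mul_of_nonneg_left hfactor (le_of_lt hK0)
    rcases le_or_gt 2 L with hL2 | hL2
    · have hstep2 : ((k:ℝ)+1) * (1 + L + Real.log L) ≤ (2 * p / L) * (1 + L + Real.log L) :=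
        mul_le_mul_of_nonneg_right hk2 hA
      have hmain : (2 * p / L) * (1 + L + Real.log L) ≤ p * (3 + Real.log 2) := by
        rw [div_mul_eq_mul_div, div_le_iff₀ hL0]
        have h1 : 2 * p * Real.log L ≤ 2 * p * (Real.log 2 + L/2 - 1) :=
          mul_le_mul_of_nonneg_left hlogL (by linarith)
        have h2 : (0:ℝ) ≤ p * Real.log 2 * (L - 2) :=
          mul_nonneg (mul_nonneg hp0.le hc0.le) (by linarith)
        linarith [h1, h2]
      linarith
    · have hKle' : ((k:ℝ)+1) ≤ (p + L) / L := by
        have hkL : (k:ℝ) * L ≤ p := (le_div_iff₀ hL0).1 hkle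
        rw [le_div_iff₀ hL0]
        nlinarith [hkL]
      have hstep2 : ((k:ℝ)+1) * (1 + L + Real.log L) ≤ ((p + L)/L) * (1 + L + Real.log L) :=
        mul_le_mul_of_nonneg_right hKle' hA
      have hmain : ((p + L)/L) * (1 + L + Real.log L) ≤ p * (3 + Real.log 2) := by
        rw [div_mul_eq_mul_div, div_le_iff₀ hL0]
        have h1 : (p + L) * Real.log L ≤ (p + L) * (Real.log 2 + L/2 - 1) :=
          mul_le_mul_of_nonneg_left hlogL (by linarith)
        have h2 : (L - 2) * (3*L - 2*Real.log 2) ≤ 0 :=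
          mul_nonpos_of_nonpos_of_nonneg (by linarith) (by linarith)
        have h3 : (0:ℝ) ≤ (p - 2) * (3*L/2 + Real.log 2 * L - Real.log 2) :=
          mul_nonneg (by linarith) (by nlinarith [mul_nonneg hc0.le (by linarith : (0:ℝ) ≤ L - 1)])
        linarith [h1, h2, h3]
      linarith
  have hchoose : ((m.choose (k+1) : ℕ) : ℝ) ≤ Real.exp (p * (3 + Real.log 2)) := by
    have hfac0 : (0:ℝ) < (Nat.factorial (k+1) : ℝ) := by
      exact_mod_cast (k+1).factorial_pos
    have h1 : ((m.choose (k+1) : ℕ) : ℝ) ≤ ((m:ℝ)^(k+1)) / (Nat.factorial (k+1) : ℝ) := by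
      have := Nat.choose_le_pow_div (α := ℝ) (k+1) m
      push_cast at this ⊢
      exact this
    have h2 : (((k:ℝ)+1))^(k+1) / (Nat.factorial (k+1) : ℝ) ≤ Real.exp ((k:ℝ)+1) := by
      have := Real.pow_div_factorial_le_exp (x := (k:ℝ)+1) hK0.le (k+1)
      exact this
    have hKpow : (0:ℝ) < ((k:ℝ)+1)^(k+1) := by positivity
    have h3 : (1:ℝ) / (Nat.factorial (k+1) : ℝ) ≤ Real.exp ((k:ℝ)+1) / ((k:ℝ)+1)^(k+1) := by
      rw [div_le_div_iff₀ hfac0 hKpow, one_mul]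
      rw [div_le_iff₀ hfac0] at h2
      linarith
    have h4 : ((m:ℝ)^(k+1)) / (Nat.factorial (k+1) : ℝ)
        ≤ (m:ℝ)^(k+1) * (Real.exp ((k:ℝ)+1) / ((k:ℝ)+1)^(k+1)) := by
      rw [div_eq_mul_one_div]
      exact mul_le_mul_of_nonneg_left h3 (by positivity)
    have h5 : (m:ℝ)^(k+1) * (Real.exp ((k:ℝ)+1) / ((k:ℝ)+1)^(k+1))
        = Real.exp (((k:ℝ)+1) * (1 + Real.log m - Real.log ((k:ℝ)+1))) := by
      have e1 : (m:ℝ)^(k+1) = Real.exp (((k+1:ℕ):ℝ) * Real.log m) := by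
        rw [← Real.log_pow, Real.exp_log (by positivity)]
      have e2 : ((k:ℝ)+1)^(k+1) = Real.exp (((k+1:ℕ):ℝ) * Real.log ((k:ℝ)+1)) := by
        rw [← Real.log_pow, Real.exp_log hKpow]
      rw [e1, e2, ← Real.exp_sub, ← Real.exp_add]
      congr 1
      push_cast
      ring
    calc ((m.choose (k+1) : ℕ) : ℝ) ≤ ((m:ℝ)^(k+1)) / (Nat.factorial (k+1) : ℝ) := h1
      _ ≤ (m:ℝ)^(k+1) * (Real.exp ((k:ℝ)+1) / ((k:ℝ)+1)^(k+1)) := h4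
      _ = Real.exp (((k:ℝ)+1) * (1 + Real.log m - Real.log ((k:ℝ)+1))) := h5
      _ ≤ Real.exp (p * (3 + Real.log 2)) := Real.exp_le_exp.2 key
  have hfin : ((m.choose (k+1) : ℕ) : ℝ) ^ (1/p)
      ≤ (Real.exp (p * (3 + Real.log 2))) ^ (1/p) :=
    Real.rpow_le_rpow (by positivity) hchoose (by positivity)
  have heq : (Real.exp (p * (3 + Real.log 2))) ^ (1/p) = 2 * Real.exp 1 ^ 3 := by
    rw [← Real.exp_one_rpow (p * (3 + Real.log 2)),
      ← Real.rpow_mul (Real.exp_pos 1).le]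
    have h6 : p * (3 + Real.log 2) * (1/p) = 3 + Real.log 2 := by field_simp
    rw [h6, Real.rpow_add (Real.exp_pos 1), Real.exp_one_rpow, Real.exp_one_rpow,
      Real.exp_log (by norm_num)]
    have e3 : Real.exp 3 = Real.exp 1 ^ 3 := by
      rw [Real.exp_one_pow]; norm_num
    rw [e3]; ring
  calc ((m.choose (k+1) : ℕ) : ℝ) ^ (1/p) ≤ (Real.exp (p * (3 + Real.log 2))) ^ (1/p) := hfin
    _ = 2 * Real.exp 1 ^ 3 := heq
end
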